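/- Let Q ∈ SO(3), e_b ∈ ℝ³ nonzero, and g, h, e ∈ ℝ³ with e − g ≠ 0, e − h ≠ 0. The three vectors x × (Q·z), (Q·e_b) × (e − g), (Q·e_b) × (e − h) are linearly independent if and only if (Q·e_b) × (e−g) and (Q·e_b) × (e−h) are linearly independent and ⟨x × (Q·z), Q·e_b⟩ ≠ 0, where x = e₁ and z = e₃ are standard basis vectors. -/
import Mathlib


open Matrix

lemma cross_cross_same_aux (u p q : Fin 3 → ℝ) :
    (crossProduct (crossProduct u p) (crossProduct u q) : Fin 3 → ℝ)
      = (u ⬝ᵥ (crossProduct p q)) • u := by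
  ext i
  fin_cases i <;>
    simp [crossProduct, dotProduct, Fin.sum_univ_three] <;> ring

/-- For Q ∈ SO(3), e_b ≠ 0, with (Q e_b)×(e−g) and (Q e_b)×(e−h) nonzero:
the vectors e₁ × (Q e₃), (Q e_b) × (e−g), (Q e_b) × (e−h) are linearly
independent iff the last two are linearly independent and
⟨e₁ × (Q e₃), Q e_b⟩ ≠ 0. -/
theorem stmt_16 (Q : Matrix (Fin 3) (Fin 3) ℝ)
    (hQ : Q ∈ Matrix.specialOrthogonalGroup (Fin 3) ℝ)
    (e_b e g h : Fin 3 → ℝ) (heb : e_b ≠ 0)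
    (hg : e - g ≠ 0) (hh : e - h ≠ 0)
    (hcg : (crossProduct (Q *ᵥ e_b) (e - g) : Fin 3 → ℝ) ≠ 0)
    (hch : (crossProduct (Q *ᵥ e_b) (e - h) : Fin 3 → ℝ) ≠ 0) :
    LinearIndependent ℝ
        ![(crossProduct (Pi.single 0 1 : Fin 3 → ℝ) (Q *ᵥ (Pi.single 2 1 : Fin 3 → ℝ)) :
            Fin 3 → ℝ),
          (crossProduct (Q *ᵥ e_b) (e - g) : Fin 3 → ℝ),
          (crossProduct (Q *ᵥ e_b) (e - h) : Fin 3 → ℝ)] ↔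
      LinearIndependent ℝ
        ![(crossProduct (Q *ᵥ e_b) (e - g) : Fin 3 → ℝ),
          (crossProduct (Q *ᵥ e_b) (e - h) : Fin 3 → ℝ)] ∧
      (crossProduct (Pi.single 0 1 : Fin 3 → ℝ) (Q *ᵥ (Pi.single 2 1 : Fin 3 → ℝ)) :
          Fin 3 → ℝ) ⬝ᵥ (Q *ᵥ e_b) ≠ 0 := by
  set a : Fin 3 → ℝ :=
    (crossProduct (Pi.single 0 1 : Fin 3 → ℝ) (Q *ᵥ (Pi.single 2 1 : Fin 3 → ℝ)) : Fin 3 → ℝ)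
    with ha
  set u : Fin 3 → ℝ := Q *ᵥ e_b with hu
  set p : Fin 3 → ℝ := e - g
  set q : Fin 3 → ℝ := e - h
  -- u ≠ 0
  have hQu : IsUnit Q := by
    rw [Matrix.mem_specialOrthogonalGroup_iff] at hQ
    exact isUnit_iff_isUnit_det Q |>.mpr (by simp [hQ.2])
  have hune : u ≠ 0 := by
    intro hz
    apply heb
    have hinj := Matrix.mulVec_injective_iff_isUnit.mpr hQu
    have : Q *ᵥ e_b = Q *ᵥ 0 := by simpa [Matrix.mulVec_zero] using hz
    exact hinj this
  -- the scalar s = u ⬝ (p × q)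
  set s : ℝ := u ⬝ᵥ (crossProduct p q) with hs
  have hident := cross_cross_same_aux u p q
  have h2 : LinearIndependent ℝ
      ![(crossProduct u p : Fin 3 → ℝ), (crossProduct u q : Fin 3 → ℝ)] ↔ s ≠ 0 := by
    rw [← crossProduct_ne_zero_iff_linearIndependent, hident, smul_ne_zero_iff]
    exact ⟨fun hx => hx.1, fun hx => ⟨hx, hune⟩⟩
  -- 3-vector linear independence via determinant
  have h3 : LinearIndependent ℝ
      ![a, (crossProduct u p : Fin 3 → ℝ), (crossProduct u q : Fin 3 → ℝ)] ↔
      (Matrix.of ![a, (crossProduct u p : Fin 3 → ℝ), (crossProduct u q : Fin 3 → ℝ)]).det ≠ 0 :=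
    (Matrix.linearIndependent_rows_iff_isUnit (K := ℝ)
        (A := Matrix.of ![a, (crossProduct u p : Fin 3 → ℝ),
          (crossProduct u q : Fin 3 → ℝ)])).trans
      ((Matrix.isUnit_iff_isUnit_det _).trans isUnit_iff_ne_zero)
  have hdet : (Matrix.of ![a, (crossProduct u p : Fin 3 → ℝ),
      (crossProduct u q : Fin 3 → ℝ)]).det = s * (a ⬝ᵥ u) := by
    have h' : (Matrix.of ![a, (crossProduct u p : Fin 3 → ℝ),
        (crossProduct u q : Fin 3 → ℝ)]).det
        = a ⬝ᵥ (crossProduct (crossProduct u p) (crossProduct u q) : Fin 3 → ℝ) :=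
      (triple_product_eq_det a (crossProduct u p) (crossProduct u q)).symm
    rw [h', hident, dotProduct_smul, smul_eq_mul]
  rw [h3, hdet, h2, mul_ne_zero_iff]
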